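/- arXiv:1406.3737 — 2 statements merged into one kernel-verified Lean document; each statement's English description precedes it below -/
import Mathlib

section
/- Let D ⊂ ℂ be a domain, (φ_n) a sequence of functions on D converging in 1-dimensional Hausdorff content to a function φ inside D, and suppose each φ_n is holomorphic in D and φ is continuous in D. If additionally the φ_n are uniformly bounded on each compact subset of D, then φ_n → φ uniformly on compact subsets of D and φ is holomorphic. -/
open Filter

/-- The 1-dimensional Hausdorff content of a set in ℂ. -/
noncomputable def hcont (B : Set ℂ) : ENNReal :=
  ⨅ (c : ℕ → ℂ) (r : ℕ → ℝ) (_ : B ⊆ ⋃ i, Metric.ball (c i) (r i)),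
    ∑' i, ENNReal.ofReal (r i)

/-!
The image of `E` under the 1-Lipschitz map `w ↦ |w - x|` has Lebesgue measure at most twice
the Hausdorff content of `E`. Hence most circles around `x` miss the
exceptional sets `{|φₙ - φ| > ε}`. On such a circle `|φₘ - φₙ| ≤ 2ε`, and by the maximum modulus
principle the same bound holds at `x`: the sequence is uniformly Cauchy on compacta, so it has a
holomorphic locally uniform limit `ψ`. Finally `{|ψ - φ| > ε}` has zero content, while it is
relatively open since `ψ` and `φ` are continuous; a nonempty open set has positive content, so
`ψ = φ`.
-/

open Metric MeasureTheory Set Topology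

lemma hcont_mono {A B : Set ℂ} (h : A ⊆ B) : hcont A ≤ hcont B :=
  iInf_mono fun _ => iInf_mono fun _ => iInf_mono' fun hB => ⟨h.trans hB, le_rfl⟩

lemma volume_image_le_two_mul_hcont {f : ℂ → ℝ} (hf : LipschitzWith 1 f) (E : Set ℂ) :
    volume (f '' E) ≤ 2 * hcont E := by
  simp only [hcont, ENNReal.mul_iInf_of_ne two_ne_zero ENNReal.ofNat_ne_top]
  refine le_iInf fun c => le_iInf fun r => le_iInf fun hE => ?_
  have himage : f '' E ⊆ ⋃ i, ball (f (c i)) (r i) := by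
    rintro _ ⟨w, hw, rfl⟩
    obtain ⟨i, hi⟩ := mem_iUnion.1 (hE hw)
    refine mem_iUnion.2 ⟨i, mem_ball.2 ((hf.dist_le_mul w (c i)).trans_lt ?_)⟩
    simpa using mem_ball.1 hi
  calc volume (f '' E) ≤ ∑' i, volume (ball (f (c i)) (r i)) :=
        (measure_mono himage).trans (measure_iUnion_le _)
    _ = ∑' i, 2 * ENNReal.ofReal (r i) := by
        simp [Real.volume_ball, ENNReal.ofReal_mul]
    _ = 2 * ∑' i, ENNReal.ofReal (r i) := ENNReal.tsum_mul_left

lemma hcont_pos_of_ball_subset {S : Set ℂ} {z : ℂ} {r : ℝ} (hr : 0 < r) (h : ball z r ⊆ S) :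
    0 < hcont S := by
  have hsub : Ioo 0 r ⊆ (dist · z) '' S := fun t ht =>
    ⟨z + t, h (by simp [abs_of_pos ht.1, ht.2]), by simp [abs_of_pos ht.1]⟩
  have hvol : 0 < volume ((dist · z) '' S) :=
    (by simpa using hr : 0 < volume (Ioo 0 r)).trans_le (measure_mono hsub)
  refine pos_iff_ne_zero.2 fun h0 => ?_
  simpa [h0] using hvol.trans_le (volume_image_le_two_mul_hcont (LipschitzWith.dist_left z) S)

lemma exists_sphere_disjoint_of_hcont_lt (z : ℂ) {ρ : ℝ} (hρ : 0 < ρ) {A B : Set ℂ}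
    (hA : hcont A < ENNReal.ofReal (ρ / 4)) (hB : hcont B < ENNReal.ofReal (ρ / 4)) :
    ∃ r ∈ Icc ρ (2 * ρ), Disjoint (sphere z r) (A ∪ B) := by
  have hlip : LipschitzWith 1 (dist · z) := LipschitzWith.dist_left z
  have hsmall : volume ((dist · z) '' (A ∪ B)) < volume (Icc ρ (2 * ρ)) :=
    calc volume ((dist · z) '' (A ∪ B))
        ≤ volume ((dist · z) '' A) + volume ((dist · z) '' B) := by
          rw [image_union]; exact measure_union_le _ _
      _ ≤ 2 * hcont A + 2 * hcont B :=
          add_le_add (volume_image_le_two_mul_hcont hlip A) (volume_image_le_two_mul_hcont hlip B)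
      _ < 2 * ENNReal.ofReal (ρ / 4) + 2 * ENNReal.ofReal (ρ / 4) :=
          ENNReal.add_lt_add ((ENNReal.mul_lt_mul_iff_right two_ne_zero ENNReal.ofNat_ne_top).2 hA)
            ((ENNReal.mul_lt_mul_iff_right two_ne_zero ENNReal.ofNat_ne_top).2 hB)
      _ = volume (Icc ρ (2 * ρ)) := by
          rw [Real.volume_Icc, ← ENNReal.ofReal_ofNat 2, ← ENNReal.ofReal_mul zero_le_two,
            ← ENNReal.ofReal_add (by positivity) (by positivity)]
          ring_nf
  obtain ⟨r, hr, hr_not_mem⟩ := not_subset.1 fun h => (measure_mono h).not_gt hsmall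
  exact ⟨r, hr, disjoint_left.2 fun w hw hwAB => hr_not_mem ⟨w, hwAB, mem_sphere.1 hw⟩⟩

lemma norm_sub_le_of_hcont_lt {F G f : ℂ → ℂ} {x : ℂ} {ρ ε : ℝ} (hρ : 0 < ρ)
    (hF : DifferentiableOn ℂ F (closedBall x (2 * ρ)))
    (hG : DifferentiableOn ℂ G (closedBall x (2 * ρ)))
    (hFf : hcont {w ∈ closedBall x (2 * ρ) | ε < ‖F w - f w‖} < ENNReal.ofReal (ρ / 4))
    (hGf : hcont {w ∈ closedBall x (2 * ρ) | ε < ‖G w - f w‖} < ENNReal.ofReal (ρ / 4)) :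
    ‖F x - G x‖ ≤ 2 * ε := by
  obtain ⟨r, ⟨hρr, hr2ρ⟩, hdisj⟩ := exists_sphere_disjoint_of_hcont_lt x hρ hFf hGf
  have hr : 0 < r := hρ.trans_le hρr
  have hball : closedBall x r ⊆ closedBall x (2 * ρ) := closedBall_subset_closedBall hr2ρ
  have hsphere : ∀ w ∈ sphere x r, ‖F w - G w‖ ≤ 2 * ε := by
    intro w hw
    have hw' : w ∈ closedBall x (2 * ρ) := hball (sphere_subset_closedBall hw)
    have hFw : ‖F w - f w‖ ≤ ε :=
      not_lt.1 fun h => disjoint_left.1 hdisj hw (Or.inl ⟨hw', h⟩)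
    have hGw : ‖G w - f w‖ ≤ ε :=
      not_lt.1 fun h => disjoint_left.1 hdisj hw (Or.inr ⟨hw', h⟩)
    calc ‖F w - G w‖ ≤ ‖F w - f w‖ + ‖f w - G w‖ := norm_sub_le_norm_sub_add_norm_sub _ _ _
      _ ≤ 2 * ε := by rw [norm_sub_rev (f w)]; linarith
  rw [← closure_ball x hr.ne'] at hball
  refine Complex.norm_le_of_forall_mem_frontier_norm_le isBounded_ball
    ((hF.sub hG).mono hball).diffContOnCl ?_ ?_
  · rwa [frontier_ball x hr.ne']
  · exact subset_closure (mem_ball_self hr)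

def TendstoInHContentOn {ι : Type*} (F : ι → ℂ → ℂ) (f : ℂ → ℂ) (l : Filter ι) (K : Set ℂ) :
    Prop :=
  ∀ ε > (0 : ℝ), Tendsto (fun n => hcont {z ∈ K | ε < ‖F n z - f z‖}) l (𝓝 0)

lemma uniformCauchySeqOn_of_tendstoInHContentOn {D K : Set ℂ} {F : ℕ → ℂ → ℂ} {f : ℂ → ℂ}
    (hD : IsOpen D) (hF : ∀ n, DifferentiableOn ℂ (F n) D)
    (hconv : ∀ K ⊆ D, IsCompact K → TendstoInHContentOn F f atTop K)
    (hKD : K ⊆ D) (hK : IsCompact K) :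
    UniformCauchySeqOn F atTop K := by
  obtain ⟨δ, hδ, hδD⟩ := hK.exists_cthickening_subset_open hD hKD
  have hρ : 0 < δ / 2 := half_pos hδ
  have hball : ∀ x ∈ K, closedBall x (2 * (δ / 2)) ⊆ cthickening δ K := fun x hx => by
    rw [mul_div_cancel₀ δ two_ne_zero]
    exact closedBall_subset_cthickening hx δ
  rw [Metric.uniformCauchySeqOn_iff]
  intro ε hε
  obtain ⟨N, hN⟩ := eventually_atTop.1 <| (hconv _ hδD hK.cthickening (ε / 3) (by positivity))
    |>.eventually_lt_const (ENNReal.ofReal_pos.2 (by positivity : 0 < δ / 2 / 4))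
  refine ⟨N, fun m hm n hn x hx => ?_⟩
  have hsmall : ∀ k ≥ N, hcont {w ∈ closedBall x (2 * (δ / 2)) | ε / 3 < ‖F k w - f w‖} <
      ENNReal.ofReal (δ / 2 / 4) := fun k hk => by
    refine (hcont_mono ?_).trans_lt (hN k hk)
    exact fun w hw => ⟨hball x hx hw.1, hw.2⟩
  have hdiff : ∀ k, DifferentiableOn ℂ (F k) (closedBall x (2 * (δ / 2))) := fun k =>
    (hF k).mono ((hball x hx).trans hδD)
  rw [dist_eq_norm]
  calc ‖F m x - F n x‖ ≤ 2 * (ε / 3) :=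
        norm_sub_le_of_hcont_lt hρ (hdiff m) (hdiff n) (hsmall m hm) (hsmall n hn)
    _ < ε := by linarith

lemma exists_tendstoUniformlyOn_of_uniformCauchySeqOn {ι α β : Type*} [Nonempty ι]
    [SemilatticeSup ι] [TopologicalSpace α] [UniformSpace β] [CompleteSpace β] [Nonempty β]
    {F : ι → α → β} {S : Set α} (h : ∀ K ⊆ S, IsCompact K → UniformCauchySeqOn F atTop K) :
    ∃ f : α → β, ∀ K ⊆ S, IsCompact K → TendstoUniformlyOn F f atTop K := by
  refine ⟨fun x => limUnder atTop (F · x), fun K hKS hK =>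
    (h K hKS hK).tendstoUniformlyOn_of_tendsto fun x hx => ?_⟩
  exact ((h {x} (singleton_subset_iff.2 (hKS hx)) isCompact_singleton).cauchySeq rfl).tendsto_limUnder

lemma TendstoInHContentOn.hcont_eq_zero {ι : Type*} {F : ι → ℂ → ℂ} {f g : ℂ → ℂ}
    {l : Filter ι} [l.NeBot] {K : Set ℂ} (hFf : TendstoInHContentOn F f l K)
    (hFg : TendstoUniformlyOn F g l K) {ε : ℝ} (hε : 0 < ε) :
    hcont {z ∈ K | ε < ‖g z - f z‖} = 0 := by
  refine le_antisymm (ge_of_tendsto (hFf (ε / 2) (half_pos hε)) ?_) zero_le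
  filter_upwards [Metric.tendstoUniformlyOn_iff.1 hFg (ε / 2) (half_pos hε)] with n hn
  refine hcont_mono fun z ⟨hzK, hz⟩ => ⟨hzK, ?_⟩
  have hgF := hn z hzK
  rw [dist_eq_norm] at hgF
  linarith [norm_sub_le_norm_sub_add_norm_sub (g z) (F n z) (f z)]

lemma eqOn_of_hcont_eq_zero {D : Set ℂ} {f g : ℂ → ℂ} (hD : IsOpen D) (hf : ContinuousOn f D)
    (hg : ContinuousOn g D)
    (h : ∀ K ⊆ D, IsCompact K → ∀ ε > (0 : ℝ), hcont {z ∈ K | ε < ‖f z - g z‖} = 0) :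
    EqOn f g D := by
  intro z hz
  by_contra hne
  have hpos : 0 < ‖f z - g z‖ := norm_pos_iff.2 (sub_ne_zero.2 hne)
  set ε := ‖f z - g z‖ / 2
  have hU : IsOpen (D ∩ (fun w => ‖f w - g w‖) ⁻¹' Ioi ε) :=
    (hf.sub hg).norm.isOpen_inter_preimage hD isOpen_Ioi
  obtain ⟨r, hr, hrU⟩ := Metric.isOpen_iff.1 hU z ⟨hz, half_lt_self hpos⟩
  have hKD : closedBall z (r / 2) ⊆ D :=
    (closedBall_subset_ball (half_lt_self hr)).trans (hrU.trans inter_subset_left)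
  have hball : ball z (r / 2) ⊆ {w ∈ closedBall z (r / 2) | ε < ‖f w - g w‖} := fun w hw =>
    ⟨ball_subset_closedBall hw, (hrU (ball_subset_ball (half_le_self hr.le) hw)).2⟩
  exact (hcont_pos_of_ball_subset (half_pos hr) hball).ne'
    (h _ hKD (isCompact_closedBall z (r / 2)) ε (half_pos hpos))

theorem stmt12_general (D : Set ℂ) (hD : IsOpen D)
    (φn : ℕ → ℂ → ℂ) (φ : ℂ → ℂ)
    (hφn : ∀ n, DifferentiableOn ℂ (φn n) D)
    (hφ : ContinuousOn φ D)
    (hconv : ∀ K : Set ℂ, K ⊆ D → IsCompact K → ∀ ε > (0:ℝ),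
      Tendsto (fun n => hcont {z ∈ K | ε < ‖φn n z - φ z‖}) atTop (nhds 0)) :
    (∀ K : Set ℂ, K ⊆ D → IsCompact K → TendstoUniformlyOn φn φ atTop K) ∧
    DifferentiableOn ℂ φ D := by
  obtain ⟨ψ, hψ⟩ := exists_tendstoUniformlyOn_of_uniformCauchySeqOn fun K hKD hK =>
    uniformCauchySeqOn_of_tendstoInHContentOn hD hφn hconv hKD hK
  have hψdiff : DifferentiableOn ℂ ψ D :=
    ((tendstoLocallyUniformlyOn_iff_forall_isCompact hD).2 hψ).differentiableOn
      (Eventually.of_forall hφn) hD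
  have hψφ : EqOn ψ φ D := eqOn_of_hcont_eq_zero hD hψdiff.continuousOn hφ
    fun K hKD hK _ hε => TendstoInHContentOn.hcont_eq_zero (hconv K hKD hK) (hψ K hKD hK) hε
  exact ⟨fun K hKD hK => (hψ K hKD hK).congr_right fun x hx => hψφ (hKD hx),
    hψdiff.congr fun x hx => (hψφ hx).symm⟩

/-- Gonchar's lemma: h-convergence of uniformly bounded holomorphic functions to a
continuous function implies local uniform convergence, and the limit is holomorphic. -/
theorem stmt12 (D : Set ℂ) (hD : IsOpen D) (hDconn : IsPreconnected D)
    (φn : ℕ → ℂ → ℂ) (φ : ℂ → ℂ)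
    (hφn : ∀ n, DifferentiableOn ℂ (φn n) D)
    (hφ : ContinuousOn φ D)
    (hconv : ∀ K : Set ℂ, K ⊆ D → IsCompact K → ∀ ε > (0:ℝ),
      Tendsto (fun n => hcont {z ∈ K | ε < ‖φn n z - φ z‖}) atTop (nhds 0))
    (hbdd : ∀ K : Set ℂ, K ⊆ D → IsCompact K → ∃ M : ℝ, ∀ n, ∀ z ∈ K, ‖φn n z‖ ≤ M) :
    (∀ K : Set ℂ, K ⊆ D → IsCompact K → TendstoUniformlyOn φn φ atTop K) ∧
    DifferentiableOn ℂ φ D :=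
  stmt12_general D hD φn φ hφn hφ hconv
end

section
/- Let σ₁, σ₂ be finite positive Borel measures on disjoint compact intervals Δ₁, Δ₂ ⊂ ℝ with infinitely many points in their supports, and let τ₁ be the inverse measure of σ₁ (so 1/σ̂₁ = ℓ₁ + τ̂₁ with ℓ₁ linear). Then for z ∈ ℂ ∖ (Δ₁ ∪ Δ₂): ŝ₁,₂(z)/ŝ₁,₁(z) = |s₁,₂|/|s₁,₁| − ⟨τ₁, ⟨σ₂, σ₁⟩⟩^(z), where |·| denotes total mass and ⟨·,·⟩^ denotes the Cauchy transform of the product measure. -/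
/-!
The partial fraction `(z - x)⁻¹ (x - t)⁻¹ = (z - t)⁻¹ ((z - x)⁻¹ - (t - x)⁻¹)` and Fubini give,
for finite measures `μ`, `ν` carried by disjoint compact sets,
`∫ (z - x)⁻¹ (∫ (x - t)⁻¹ f(t) dν(t)) dμ(x) = ∫ (z - t)⁻¹ f(t) (μ̂(z) - μ̂(t)) dν(t)`.
With `μ = σ₁`, `f = 1` this rewrites `ŝ₁,₂(z)`; with `μ = τ₁`, `f = σ̂₁` it rewrites
`⟨τ₁, ⟨σ₂, σ₁⟩⟩^(z)`. On `Δ₂` the relation `1/σ̂₁ = ℓ₁ + τ̂₁` turns the second integrand into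
`-(first integrand)/σ̂₁(z) - σ̂₁(t)/|σ₁|`, and `∫ σ̂₁ dσ₂ = -∫ σ̂₂ dσ₁ = -|s₁,₂|` by antisymmetry of
the kernel. Division by `σ̂₁` is legitimate because `σ̂₁` has no zeros off `Δ₁`: for nonreal `z`
its imaginary part has the sign of `-Im z`, for real `z` the integrand `(z - x)⁻¹` has constant
sign.
-/

open MeasureTheory

/-- Cauchy transform of a measure on ℝ. -/
noncomputable def cauchy (s : Measure ℝ) (z : ℂ) : ℂ := ∫ x, (z - (x : ℂ))⁻¹ ∂s

/-- Real Cauchy transform of a measure on ℝ, evaluated on ℝ. -/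
noncomputable def cauchyR (s : Measure ℝ) (t : ℝ) : ℝ := ∫ x, (t - x)⁻¹ ∂s

open Set

lemma cauchy_ofReal (μ : Measure ℝ) (t : ℝ) : cauchy μ t = cauchyR μ t := by
  rw [cauchy, cauchyR, ← integral_complex_ofReal]
  push_cast
  rfl

lemma measurable_cauchyR (μ : Measure ℝ) [SFinite μ] : Measurable (cauchyR μ) :=
  (Measurable.stronglyMeasurable (by fun_prop : Measurable fun p : ℝ × ℝ => (p.1 - p.2)⁻¹))
    |>.integral_prod_right' |>.measurable

section CompactSupports

variable {S T : Set ℝ} {μ ν : Measure ℝ}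

lemma IsCompact.exists_bound_inv_sub (hS : IsCompact S) {z : ℂ} (hz : ∀ x ∈ S, z ≠ x) :
    ∃ C, ∀ x ∈ S, ‖(z - x)⁻¹‖ ≤ C :=
  hS.exists_bound_of_continuousOn <| (continuousOn_const.sub (by fun_prop)).inv₀
    fun x hx => sub_ne_zero.2 (hz x hx)

lemma exists_bound_inv_sub_of_disjoint (hS : IsCompact S) (hT : IsCompact T)
    (hST : Disjoint S T) : ∃ C, ∀ x ∈ S, ∀ t ∈ T, ‖(x - t)⁻¹‖ ≤ C := by
  obtain ⟨C, hC⟩ := (hS.prod hT).exists_bound_of_continuousOn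
    (f := fun p : ℝ × ℝ => (p.1 - p.2)⁻¹) <| (continuous_fst.sub continuous_snd).continuousOn.inv₀
      fun p hp => sub_ne_zero.2 (hST.ne_of_mem hp.1 hp.2)
  exact ⟨C, fun x hx t ht => hC (x, t) ⟨hx, ht⟩⟩

lemma ae_mem_prod (hμ : ∀ᵐ x ∂μ, x ∈ S) (hν : ∀ᵐ t ∂ν, t ∈ T) :
    ∀ᵐ p ∂μ.prod ν, p.1 ∈ S ∧ p.2 ∈ T :=
  (Measure.quasiMeasurePreserving_fst.ae hμ).and (Measure.quasiMeasurePreserving_snd.ae hν)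

lemma MeasureTheory.Integrable.inv_sub_mul (hS : IsCompact S) (hμ : ∀ᵐ x ∂μ, x ∈ S) {z : ℂ}
    (hz : ∀ x ∈ S, z ≠ x) {g : ℝ → ℂ} (hg : Integrable g μ) :
    Integrable (fun x : ℝ => (z - x)⁻¹ * g x) μ := by
  obtain ⟨C, hC⟩ := hS.exists_bound_inv_sub hz
  exact hg.bdd_mul (by fun_prop) (hμ.mono hC)

variable [IsFiniteMeasure μ] [IsFiniteMeasure ν]

lemma integrable_inv_sub (hS : IsCompact S) (hμ : ∀ᵐ x ∂μ, x ∈ S) {z : ℂ}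
    (hz : ∀ x ∈ S, z ≠ x) : Integrable (fun x : ℝ => (z - x)⁻¹) μ := by
  simpa using (integrable_const (1 : ℂ)).inv_sub_mul hS hμ hz

lemma integrable_inv_sub_prod (hS : IsCompact S) (hT : IsCompact T) (hST : Disjoint S T)
    (hμ : ∀ᵐ x ∂μ, x ∈ S) (hν : ∀ᵐ t ∂ν, t ∈ T) :
    Integrable (fun p : ℝ × ℝ => (p.1 - p.2)⁻¹) (μ.prod ν) := by
  obtain ⟨C, hC⟩ := exists_bound_inv_sub_of_disjoint hS hT hST
  exact .of_bound (by fun_prop) C ((ae_mem_prod hμ hν).mono fun p hp => hC _ hp.1 _ hp.2)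

lemma integrable_cauchyR (hS : IsCompact S) (hT : IsCompact T) (hST : Disjoint S T)
    (hμ : ∀ᵐ x ∂μ, x ∈ S) (hν : ∀ᵐ t ∂ν, t ∈ T) : Integrable (cauchyR μ) ν := by
  obtain ⟨C, hC⟩ := exists_bound_inv_sub_of_disjoint hT hS hST.symm
  refine .of_bound (measurable_cauchyR μ).aestronglyMeasurable (C * μ.real univ)
    (hν.mono fun t ht => ?_)
  exact norm_integral_le_of_norm_le_const (hμ.mono fun x hx => hC t ht x hx)

lemma integral_cauchyR_swap (hS : IsCompact S) (hT : IsCompact T) (hST : Disjoint S T)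
    (hμ : ∀ᵐ x ∂μ, x ∈ S) (hν : ∀ᵐ t ∂ν, t ∈ T) :
    ∫ t, cauchyR μ t ∂ν = -∫ x, cauchyR ν x ∂μ := by
  simp only [cauchyR]
  rw [integral_integral_swap (integrable_inv_sub_prod hT hS hST.symm hν hμ), ← integral_neg]
  congr with x
  rw [← integral_neg]
  congr with t
  rw [neg_inv, neg_sub]

theorem integral_inv_sub_mul_integral (hS : IsCompact S) (hT : IsCompact T)
    (hST : Disjoint S T) (hμ : ∀ᵐ x ∂μ, x ∈ S) (hν : ∀ᵐ t ∂ν, t ∈ T) {z : ℂ} (hzS : ∀ x ∈ S, z ≠ x)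
    (hzT : ∀ t ∈ T, z ≠ t) {f : ℝ → ℝ} (hf : Integrable f ν) :
    ∫ x, (z - x)⁻¹ * ((∫ t, (x - t)⁻¹ * f t ∂ν : ℝ) : ℂ) ∂μ
      = ∫ t, (z - t)⁻¹ * f t * (cauchy μ z - cauchy μ t) ∂ν := by
  have hF : Integrable (fun p : ℝ × ℝ => (z - p.1)⁻¹ * ((p.1 : ℂ) - p.2)⁻¹ * (f p.2 : ℂ))
      (μ.prod ν) := by
    obtain ⟨C₁, hC₁⟩ := hS.exists_bound_inv_sub hzS
    obtain ⟨C₂, hC₂⟩ := exists_bound_inv_sub_of_disjoint hS hT hST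
    refine ((hf.ofReal (𝕜 := ℂ)).comp_snd μ).bdd_mul (c := C₁ * C₂) (by fun_prop)
      ((ae_mem_prod hμ hν).mono fun p hp => norm_mul_le_of_le (hC₁ _ hp.1) ?_)
    simpa only [← Complex.ofReal_sub, ← Complex.ofReal_inv, Complex.norm_real]
      using hC₂ _ hp.1 _ hp.2
  have inner : ∀ᵐ (t : ℝ) ∂ν, ∫ x, (z - x)⁻¹ * ((x : ℂ) - t)⁻¹ * (f t : ℂ) ∂μ
      = (z - t)⁻¹ * f t * (cauchy μ z - cauchy μ t) := by
    filter_upwards [hν] with t ht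
    have htS : ∀ x ∈ S, (t : ℂ) ≠ x := fun x hx h =>
      hST.ne_of_mem hx ht (Complex.ofReal_injective h).symm
    have hsplit : ∀ᵐ (x : ℝ) ∂μ, (z - x)⁻¹ * ((x : ℂ) - t)⁻¹ * (f t : ℂ)
        = (z - t)⁻¹ * f t * ((z - x)⁻¹ - ((t : ℂ) - x)⁻¹) := by
      filter_upwards [hμ] with x hx
      have hzx := sub_ne_zero.2 (hzS x hx)
      have hzt := sub_ne_zero.2 (hzT t ht)
      have htx := sub_ne_zero.2 (htS x hx)
      rw [← neg_sub (t : ℂ), inv_neg]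
      field_simp
      ring
    rw [integral_congr_ae hsplit, integral_const_mul,
      integral_sub (integrable_inv_sub hS hμ hzS) (integrable_inv_sub hS hμ htS), cauchy, cauchy]
  calc ∫ x, (z - x)⁻¹ * ((∫ t, (x - t)⁻¹ * f t ∂ν : ℝ) : ℂ) ∂μ
      = ∫ x, ∫ t, (z - x)⁻¹ * ((x : ℂ) - t)⁻¹ * (f t : ℂ) ∂ν ∂μ := by
        congr with x
        rw [← integral_complex_ofReal, ← integral_const_mul]
        push_cast
        simp only [mul_assoc]
    _ = ∫ t, ∫ x, (z - x)⁻¹ * ((x : ℂ) - t)⁻¹ * (f t : ℂ) ∂μ ∂ν := integral_integral_swap hF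
    _ = ∫ t, (z - t)⁻¹ * f t * (cauchy μ z - cauchy μ t) ∂ν := integral_congr_ae inner

end CompactSupports

lemma cauchy_ne_zero_of_re_mul_pos {μ : Measure ℝ} (hμ : μ ≠ 0) {z w : ℂ}
    (hint : Integrable (fun x : ℝ => (z - x)⁻¹) μ) (hpos : ∀ᵐ (x : ℝ) ∂μ, 0 < (w * (z - x)⁻¹).re) :
    cauchy μ z ≠ 0 := by
  intro h0
  have hre : ∫ x, (w * (z - x)⁻¹).re ∂μ = (w * cauchy μ z).re := by
    rw [cauchy, ← integral_const_mul]
    exact integral_re (hint.const_mul w)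
  have hpos' : 0 < ∫ x, (w * (z - x)⁻¹).re ∂μ := by
    rw [integral_pos_iff_support_of_nonneg_ae (hpos.mono fun _ h => h.le)
      (hint.const_mul w).re]
    refine (Measure.measure_univ_pos.2 hμ).trans_le (measure_mono_ae ?_)
    exact hpos.mono fun x hx _ => hx.ne'
  rw [hre, h0, mul_zero, Complex.zero_re] at hpos'
  exact hpos'.false

lemma cauchy_ne_zero {a b : ℝ} {μ : Measure ℝ} [IsFiniteMeasure μ] (hμ : μ ≠ 0)
    (hμab : ∀ᵐ x ∂μ, x ∈ Icc a b) {z : ℂ} (hz : ∀ x ∈ Icc a b, z ≠ x) : cauchy μ z ≠ 0 := by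
  have hint := integrable_inv_sub isCompact_Icc hμab hz
  by_cases him : z.im = 0
  · obtain ⟨r, rfl⟩ : ∃ r : ℝ, (r : ℂ) = z := ⟨z.re, Complex.ext rfl him.symm⟩
    have hr : r ∉ Icc a b := fun h => hz r h rfl
    refine cauchy_ne_zero_of_re_mul_pos hμ (w := r - a) hint (hμab.mono fun x hx => ?_)
    rw [← Complex.ofReal_sub, ← Complex.ofReal_sub, ← Complex.ofReal_inv, ← Complex.ofReal_mul,
      Complex.ofReal_re]
    rcases not_and_or.1 hr with hra | hrb
    · exact div_pos_of_neg_of_neg (by linarith) (by linarith [hx.1])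
    · exact div_pos (by linarith [hx.1, hx.2]) (by linarith [hx.2])
  · refine cauchy_ne_zero_of_re_mul_pos hμ (w := z.im * Complex.I) hint (hμab.mono fun x _ => ?_)
    have hzx : z - x ≠ 0 := fun h => him (by simpa using congrArg Complex.im h)
    have hre : (z.im * Complex.I * (z - x)⁻¹).re = z.im ^ 2 / Complex.normSq (z - x) := by
      simp only [Complex.mul_re, Complex.mul_im, Complex.ofReal_re, Complex.ofReal_im,
        Complex.I_re, Complex.I_im, Complex.inv_im, Complex.sub_im]
      ring
    rw [hre]
    exact div_pos (sq_pos_of_ne_zero him) (Complex.normSq_pos.2 hzx)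

theorem stmt15_general (a₁ b₁ a₂ b₂ : ℝ)
    (σ₁ σ₂ τ₁ : Measure ℝ)
    [IsFiniteMeasure σ₁] [IsFiniteMeasure σ₂] [IsFiniteMeasure τ₁]
    (hsupp₁ : σ₁ ((Set.Icc a₁ b₁)ᶜ) = 0) (hsupp₂ : σ₂ ((Set.Icc a₂ b₂)ᶜ) = 0)
    (hsuppτ : τ₁ ((Set.Icc a₁ b₁)ᶜ) = 0)
    (hinf₁ : ∀ F : Finset ℝ, σ₁ ((↑F : Set ℝ))ᶜ ≠ 0)
    (hdisj : Disjoint (Set.Icc a₁ b₁) (Set.Icc a₂ b₂))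
    (c : ℝ)
    (hτ : ∀ z : ℂ, (∀ x ∈ Set.Icc a₁ b₁, z ≠ (x : ℂ)) →
      (cauchy σ₁ z)⁻¹ = (((σ₁ Set.univ).toReal)⁻¹ : ℝ) * z + (c : ℂ) + cauchy τ₁ z) :
    ∀ z : ℂ, (∀ x ∈ Set.Icc a₁ b₁ ∪ Set.Icc a₂ b₂, z ≠ (x : ℂ)) →
      (∫ x, (z - (x : ℂ))⁻¹ * (cauchyR σ₂ x : ℂ) ∂σ₁) / cauchy σ₁ z
        = (((∫ x, cauchyR σ₂ x ∂σ₁) / (σ₁ Set.univ).toReal : ℝ) : ℂ)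
          - ∫ x, (z - (x : ℂ))⁻¹ * ((∫ t, (x - t)⁻¹ * cauchyR σ₁ t ∂σ₂ : ℝ) : ℂ) ∂τ₁ := by
  intro z hz
  have ae₁ : ∀ᵐ x ∂σ₁, x ∈ Icc a₁ b₁ := mem_ae_iff.2 hsupp₁
  have ae₂ : ∀ᵐ t ∂σ₂, t ∈ Icc a₂ b₂ := mem_ae_iff.2 hsupp₂
  have aeτ : ∀ᵐ x ∂τ₁, x ∈ Icc a₁ b₁ := mem_ae_iff.2 hsuppτ
  have hz₁ : ∀ x ∈ Icc a₁ b₁, z ≠ x := fun x hx => hz x (.inl hx)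
  have hz₂ : ∀ t ∈ Icc a₂ b₂, z ≠ t := fun t ht => hz t (.inr ht)
  have hσ₁ : σ₁ ≠ 0 := by rintro rfl; exact hinf₁ ∅ rfl
  set m := (σ₁ univ).toReal
  have hm : m ≠ 0 :=
    ENNReal.toReal_ne_zero.2 ⟨Measure.measure_univ_ne_zero.2 hσ₁, measure_ne_top _ _⟩
  have hS₁ := cauchy_ne_zero hσ₁ ae₁ hz₁
  have hg₁ := integrable_cauchyR isCompact_Icc isCompact_Icc hdisj ae₁ ae₂
  have hN : ∫ x, (z - x)⁻¹ * (cauchyR σ₂ x : ℂ) ∂σ₁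
      = ∫ t, (z - t)⁻¹ * (cauchy σ₁ z - cauchyR σ₁ t) ∂σ₂ := by
    simpa [cauchyR, cauchy_ofReal] using integral_inv_sub_mul_integral isCompact_Icc
      isCompact_Icc hdisj ae₁ ae₂ hz₁ hz₂ (integrable_const (1 : ℝ))
  have hpointwise : ∀ᵐ (t : ℝ) ∂σ₂, (z - t)⁻¹ * (cauchyR σ₁ t : ℂ) * (cauchy τ₁ z - cauchy τ₁ t)
      = -((z - t)⁻¹ * (cauchy σ₁ z - cauchyR σ₁ t)) / cauchy σ₁ z - (cauchyR σ₁ t : ℂ) / m := by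
    filter_upwards [ae₂] with t ht
    have htS : ∀ x ∈ Icc a₁ b₁, (t : ℂ) ≠ x := fun x hx h =>
      hdisj.ne_of_mem hx ht (Complex.ofReal_injective h).symm
    have hzt := sub_ne_zero.2 (hz₂ t ht)
    have hgt := cauchy_ne_zero hσ₁ ae₁ htS
    have hτz : cauchy τ₁ z = (cauchy σ₁ z)⁻¹ - (m : ℂ)⁻¹ * z - c := by
      rw [hτ z hz₁]; push_cast; ring
    have hτt : cauchy τ₁ t = (cauchy σ₁ t)⁻¹ - (m : ℂ)⁻¹ * t - c := by
      rw [hτ t htS]; push_cast; ring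
    rw [hτz, hτt, ← cauchy_ofReal]
    field_simp
    ring
  rw [integral_inv_sub_mul_integral isCompact_Icc isCompact_Icc hdisj aeτ ae₂ hz₁ hz₂ hg₁,
    integral_congr_ae hpointwise, integral_sub, integral_div, integral_div, integral_neg, ← hN,
    integral_complex_ofReal, integral_cauchyR_swap isCompact_Icc isCompact_Icc hdisj ae₁ ae₂]
  · push_cast
    field_simp
    ring
  · exact (((integrable_const (cauchy σ₁ z)).sub hg₁.ofReal).inv_sub_mul isCompact_Icc ae₂
      hz₂).neg.div_const _
  · exact hg₁.ofReal.div_const _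

/-- Ratio formula ŝ₁,₂/ŝ₁,₁ = |s₁,₂|/|s₁,₁| − ⟨τ₁,⟨σ₂,σ₁⟩⟩^ for a Nikishin pair. -/
theorem stmt15 (a₁ b₁ a₂ b₂ : ℝ) (ha₁ : a₁ ≤ b₁) (ha₂ : a₂ ≤ b₂)
    (σ₁ σ₂ τ₁ : Measure ℝ)
    [IsFiniteMeasure σ₁] [IsFiniteMeasure σ₂] [IsFiniteMeasure τ₁]
    (hsupp₁ : σ₁ ((Set.Icc a₁ b₁)ᶜ) = 0) (hsupp₂ : σ₂ ((Set.Icc a₂ b₂)ᶜ) = 0)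
    (hsuppτ : τ₁ ((Set.Icc a₁ b₁)ᶜ) = 0)
    (hinf₁ : ∀ F : Finset ℝ, σ₁ ((↑F : Set ℝ))ᶜ ≠ 0)
    (hinf₂ : ∀ F : Finset ℝ, σ₂ ((↑F : Set ℝ))ᶜ ≠ 0)
    (hdisj : Disjoint (Set.Icc a₁ b₁) (Set.Icc a₂ b₂))
    (c : ℝ)
    (hτ : ∀ z : ℂ, (∀ x ∈ Set.Icc a₁ b₁, z ≠ (x : ℂ)) →
      (cauchy σ₁ z)⁻¹ = (((σ₁ Set.univ).toReal)⁻¹ : ℝ) * z + (c : ℂ) + cauchy τ₁ z) :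
    ∀ z : ℂ, (∀ x ∈ Set.Icc a₁ b₁ ∪ Set.Icc a₂ b₂, z ≠ (x : ℂ)) →
      (∫ x, (z - (x : ℂ))⁻¹ * (cauchyR σ₂ x : ℂ) ∂σ₁) / cauchy σ₁ z
        = (((∫ x, cauchyR σ₂ x ∂σ₁) / (σ₁ Set.univ).toReal : ℝ) : ℂ)
          - ∫ x, (z - (x : ℂ))⁻¹ * ((∫ t, (x - t)⁻¹ * cauchyR σ₁ t ∂σ₂ : ℝ) : ℂ) ∂τ₁ :=
  stmt15_general a₁ b₁ a₂ b₂ σ₁ σ₂ τ₁ hsupp₁ hsupp₂ hsuppτ hinf₁ hdisj c hτ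
end
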